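/- arXiv:math/0703869 — 7 statements merged into one kernel-verified Lean document; each statement's English description precedes it below -/
import Mathlib

section
/- Let U be a group and τ : U → U an involutive automorphism. Suppose the tuple (a₁,b₁,…,a_g,b_g,c₁,…,c_l) ∈ U^{2g+l} satisfies [a₁,b₁]⋯[a_g,b_g]·c₁⋯c_l = 1. Then the tuple is decomposable if and only if there exists φ ∈ U with τ(φ⁻¹) = φ such that β(a₁,…,c_l) = (φa₁φ⁻¹, φb₁φ⁻¹, …, φc_lφ⁻¹) is the tuple obtained by simultaneously conjugating every component by φ. -/
/-!
Write `x_k` for the `k`-th factor of `μ = [a₁,b₁]⋯[a_g,b_g]·c₁⋯c_l` and `T_k = x_k x_{k+1} ⋯` for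
its tails, so that `P_i = T_{i+1}` and `Q_j = T_{g+j+1}`. When `μ = 1`, the conditions
`x_k = s_k s_{k+1}⁻¹` of a decomposition telescope to `s_k = T_k s₀`, so a decomposition is the
same as an element `φ = s₀⁻¹` whose sequence `s_k = T_k φ⁻¹` lies in `Fix(τ⁻)` and satisfies
`τ(a_i) = s_{i+1}⁻¹ b_i s_{i+1}`. For such `s`, `τ(P_i) = s_{i+1}⁻¹ φ⁻¹`, so the conjugation by
`τ(P_i)⁻¹` in `β` is the conjugation by `φ s_{i+1}`, and the conditions on `a_i`, `b_i`, `c_j`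
become exactly `β = φ(·)φ⁻¹`. Conversely, the equations `β = φ(·)φ⁻¹` give
`τ(x_k) = s_{k+1}⁻¹ x_k⁻¹ s_{k+1}`, which carries `s_k ∈ Fix(τ⁻)` down from `s_{g+l} = φ⁻¹`.
-/

namespace Stmt0

variable {U : Type*}

/-- The commutator `[a,b] = a b a⁻¹ b⁻¹`. -/
def gcomm [Group U] (a b : U) : U := a * b * a⁻¹ * b⁻¹

/-- Ordered product `f i * f (i+1) * ⋯ * f (n-1)`. -/
def oprod [Monoid U] (f : ℕ → U) (i n : ℕ) : U := ((List.range' i (n - i)).map f).prod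

/-- `P_i = [a_{i+1},b_{i+1}] ⋯ [a_g,b_g] · c₁ ⋯ c_l` (0-based indices). -/
def Pf [Group U] (g l : ℕ) (a b c : ℕ → U) (i : ℕ) : U :=
  oprod (fun k => gcomm (a k) (b k)) (i + 1) g * oprod c 0 l

/-- `Q_j = c_{j+1} ⋯ c_l` (0-based indices). -/
def Qf [Monoid U] (l : ℕ) (c : ℕ → U) (j : ℕ) : U := oprod c (j + 1) l

/-- The `aᵢ`-component of the involution `β`: `a′_i = τ(P_i)⁻¹ τ(b_i) τ(P_i)`. -/
def betaA [Group U] (τ : U ≃* U) (g l : ℕ) (a b c : ℕ → U) (i : ℕ) : U :=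
  (τ (Pf g l a b c i))⁻¹ * τ (b i) * τ (Pf g l a b c i)

/-- The `bᵢ`-component of the involution `β`: `b′_i = τ(P_i)⁻¹ τ(a_i) τ(P_i)`. -/
def betaB [Group U] (τ : U ≃* U) (g l : ℕ) (a b c : ℕ → U) (i : ℕ) : U :=
  (τ (Pf g l a b c i))⁻¹ * τ (a i) * τ (Pf g l a b c i)

/-- The `cⱼ`-component of the involution `β`: `c′_j = τ(Q_j)⁻¹ τ(c_j⁻¹) τ(Q_j)`. -/
def betaC [Group U] (τ : U ≃* U) (l : ℕ) (c : ℕ → U) (j : ℕ) : U :=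
  (τ (Qf l c j))⁻¹ * τ (c j)⁻¹ * τ (Qf l c j)

/-- The momentum map `μ(a,b,c) = [a₁,b₁]⋯[a_g,b_g]·c₁⋯c_l`. -/
def muMap [Group U] (g l : ℕ) (a b c : ℕ → U) : U :=
  oprod (fun k => gcomm (a k) (b k)) 0 g * oprod c 0 l

/-- A tuple `(a₁,b₁,…,a_g,b_g,c₁,…,c_l)` is decomposable: there are
`v₁,…,v_g,w₁,…,w_l ∈ Fix(τ⁻)` (encoded as the single cyclic list
`s 0,…,s (g+l-1)`, with `v_i = s (i-1)`, `w_j = s (g+j-1)`, and the cyclic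
conventions `v_{g+1} := w₁`, `w_{l+1} := v₁` realized by reduction mod `g+l`)
with `[a_i,b_i] = v_i v_{i+1}⁻¹`, `c_j = w_j w_{j+1}⁻¹`, and
`τ(a_i) = v_{i+1}⁻¹ b_i v_{i+1}`. -/
def Decomposable [Group U] (τ : U ≃* U) (g l : ℕ) (a b c : ℕ → U) : Prop :=
  ∃ s : ℕ → U,
    (∀ k, k < g + l → τ (s k)⁻¹ = s k) ∧
    (∀ i, i < g → gcomm (a i) (b i) = s i * (s ((i + 1) % (g + l)))⁻¹) ∧
    (∀ j, j < l → c j = s (g + j) * (s ((g + j + 1) % (g + l)))⁻¹) ∧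
    (∀ i, i < g → τ (a i) = (s ((i + 1) % (g + l)))⁻¹ * b i * s ((i + 1) % (g + l)))

section GroupLemmas

variable [Group U] {F : Type*} [FunLike F U U] [MonoidHomClass F U U] (τ : F)

lemma map_inv_eq_iff_map_eq_inv {u : U} : τ u⁻¹ = u ↔ τ u = u⁻¹ := by
  rw [map_inv, inv_eq_iff_eq_inv]

variable {τ}

lemma eq_mul_inv_of_telescoping {T s : ℕ → U} {n : ℕ} (h0 : T 0 = 1)
    (hT : ∀ k < n, T k = s k * (s (k + 1))⁻¹ * T (k + 1)) :
    ∀ k ≤ n, T k = s k * (s 0)⁻¹ := by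
  intro k
  induction k with
  | zero => simp [h0]
  | succ k ih =>
    intro hk
    have hstep := hT k (by omega)
    rw [ih (by omega)] at hstep
    calc T (k + 1) = (s k * (s (k + 1))⁻¹)⁻¹ * (s k * (s 0)⁻¹) := by rw [hstep]; group
      _ = s (k + 1) * (s 0)⁻¹ := by group

lemma map_eq_inv_of_telescoping {s x : ℕ → U} {n : ℕ} (hs : ∀ k < n, s k = x k * s (k + 1))
    (hn : τ (s n) = (s n)⁻¹)
    (hx : ∀ k < n, τ (s (k + 1)) = (s (k + 1))⁻¹ →
      τ (x k) = (s (k + 1))⁻¹ * (x k)⁻¹ * s (k + 1)) :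
    ∀ k ≤ n, τ (s k) = (s k)⁻¹ := by
  intro k hk
  refine Nat.decreasingInduction (fun k hk ih => ?_) hn hk
  rw [hs k hk, map_mul, hx k hk ih, ih]
  group

lemma map_gcomm_of_map_eq_conj {a b s : U} (ha : τ a = s⁻¹ * b * s) (hb : τ b = s⁻¹ * a * s) :
    τ (gcomm a b) = s⁻¹ * (gcomm a b)⁻¹ * s := by
  simp only [gcomm, map_mul, map_inv, ha, hb]
  group

lemma map_eq_conj_of_map_eq_conj (hτ : ∀ u : U, τ (τ u) = u) {a b s : U} (hs : τ s = s⁻¹)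
    (ha : τ a = s⁻¹ * b * s) : τ b = s⁻¹ * a * s := by
  have h := congrArg τ ha
  rw [hτ, map_mul, map_mul, map_inv, hs, inv_inv] at h
  rw [h]
  group

lemma conj_map_eq_conj_iff {s φ x y : U} (hs : τ s = s⁻¹) (hφ : τ φ = φ⁻¹) :
    (τ (s * φ))⁻¹ * y * τ (s * φ) = φ * x * φ⁻¹ ↔ y = s⁻¹ * x * s := by
  rw [map_mul, hs, hφ]
  constructor
  · intro h
    calc y = s⁻¹ * φ⁻¹ * ((s⁻¹ * φ⁻¹)⁻¹ * y * (s⁻¹ * φ⁻¹)) * φ * s := by group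
      _ = s⁻¹ * x * s := by rw [h]; group
  · rintro rfl
    group

end GroupLemmas

section TailProducts

variable [Group U]

lemma oprod_eq_mul_oprod_succ (f : ℕ → U) {i n : ℕ} (h : i < n) :
    oprod f i n = f i * oprod f (i + 1) n := by
  rw [oprod, oprod, show n - i = n - (i + 1) + 1 by omega, List.range'_succ, List.map_cons,
    List.prod_cons]

lemma oprod_eq_one (f : ℕ → U) {i n : ℕ} (h : n ≤ i) : oprod f i n = 1 := by
  simp [oprod, Nat.sub_eq_zero_of_le h]

def factor (g : ℕ) (a b c : ℕ → U) (k : ℕ) : U :=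
  if k < g then gcomm (a k) (b k) else c (k - g)

def tail (g l : ℕ) (a b c : ℕ → U) (k : ℕ) : U :=
  oprod (fun m => gcomm (a m) (b m)) k g * oprod c (k - g) l

variable {g l : ℕ} {a b c : ℕ → U}

lemma factor_add (j : ℕ) : factor g a b c (g + j) = c j := by
  simp [factor]

lemma forall_factor_iff (P : ℕ → U → Prop) :
    (∀ k < g + l, P k (factor g a b c k)) ↔
      (∀ i < g, P i (gcomm (a i) (b i))) ∧ ∀ j < l, P (g + j) (c j) := by
  constructor
  · intro h
    refine ⟨fun i hi => ?_, fun j hj => ?_⟩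
    · simpa [factor, hi] using h i (by omega)
    · simpa [factor] using h (g + j) (by omega)
  · rintro ⟨hcomm, hc⟩ k hk
    by_cases hkg : k < g
    · simpa [factor, hkg] using hcomm k hkg
    · obtain ⟨j, rfl⟩ := Nat.exists_eq_add_of_le (not_lt.mp hkg)
      simpa [factor] using hc j (by omega)

lemma tail_zero : tail g l a b c 0 = muMap g l a b c := by
  simp [tail, muMap]

lemma tail_length : tail g l a b c (g + l) = 1 := by
  rw [tail, oprod_eq_one _ (by omega), oprod_eq_one _ (by omega), one_mul]

lemma tail_eq_factor_mul {k : ℕ} (hk : k < g + l) :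
    tail g l a b c k = factor g a b c k * tail g l a b c (k + 1) := by
  by_cases hkg : k < g
  · rw [tail, tail, oprod_eq_mul_oprod_succ _ hkg, show k + 1 - g = k - g by omega]
    simp only [factor, hkg, if_true, mul_assoc]
  · rw [tail, tail, oprod_eq_one (fun m => gcomm (a m) (b m)) (by omega),
      oprod_eq_one (fun m => gcomm (a m) (b m)) (by omega),
      oprod_eq_mul_oprod_succ c (show k - g < l by omega), show k + 1 - g = k - g + 1 by omega]
    simp [factor, hkg]

lemma Pf_eq_tail {i : ℕ} (hi : i < g) : Pf g l a b c i = tail g l a b c (i + 1) := by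
  rw [Pf, tail, show i + 1 - g = 0 by omega]

lemma Qf_eq_tail (j : ℕ) : Qf l c j = tail g l a b c (g + j + 1) := by
  rw [Qf, tail, oprod_eq_one (fun m => gcomm (a m) (b m)) (by omega), one_mul,
    show g + j + 1 - g = j + 1 by omega]

lemma tail_mod_length (hrel : muMap g l a b c = 1) {k : ℕ} (hk : k ≤ g + l) :
    tail g l a b c (k % (g + l)) = tail g l a b c k := by
  rcases hk.lt_or_eq with hk | rfl
  · rw [Nat.mod_eq_of_lt hk]
  · rw [Nat.mod_self, tail_zero, hrel, tail_length]

end TailProducts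

section Witness

variable [Group U]

def tailWitness (g l : ℕ) (a b c : ℕ → U) (φ : U) (k : ℕ) : U := tail g l a b c k * φ⁻¹

def DecomposableWith (τ : U ≃* U) (g l : ℕ) (a b c : ℕ → U) (φ : U) : Prop :=
  (∀ k ≤ g + l, τ (tailWitness g l a b c φ k) = (tailWitness g l a b c φ k)⁻¹) ∧
  ∀ i < g, τ (a i) =
    (tailWitness g l a b c φ (i + 1))⁻¹ * b i * tailWitness g l a b c φ (i + 1)

variable {τ : U ≃* U} {g l : ℕ} {a b c : ℕ → U} {φ : U}

lemma tail_eq_tailWitness_mul (k : ℕ) : tail g l a b c k = tailWitness g l a b c φ k * φ := by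
  simp [tailWitness]

lemma factor_eq_tailWitness {k : ℕ} (hk : k < g + l) :
    factor g a b c k = tailWitness g l a b c φ k * (tailWitness g l a b c φ (k + 1))⁻¹ := by
  rw [tailWitness, tailWitness, tail_eq_factor_mul hk]
  group

lemma tailWitness_mod_length (hrel : muMap g l a b c = 1) {k : ℕ} (hk : k ≤ g + l) :
    tailWitness g l a b c φ (k % (g + l)) = tailWitness g l a b c φ k := by
  rw [tailWitness, tailWitness, tail_mod_length hrel hk]

lemma betaA_eq_conj_iff (hφ : τ φ = φ⁻¹) {i : ℕ} (hi : i < g)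
    (hw : τ (tailWitness g l a b c φ (i + 1)) = (tailWitness g l a b c φ (i + 1))⁻¹) :
    betaA τ g l a b c i = φ * a i * φ⁻¹ ↔
      τ (b i) = (tailWitness g l a b c φ (i + 1))⁻¹ * a i * tailWitness g l a b c φ (i + 1) := by
  rw [betaA, Pf_eq_tail hi, tail_eq_tailWitness_mul (φ := φ)]
  exact conj_map_eq_conj_iff hw hφ

lemma betaB_eq_conj_iff (hφ : τ φ = φ⁻¹) {i : ℕ} (hi : i < g)
    (hw : τ (tailWitness g l a b c φ (i + 1)) = (tailWitness g l a b c φ (i + 1))⁻¹) :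
    betaB τ g l a b c i = φ * b i * φ⁻¹ ↔
      τ (a i) = (tailWitness g l a b c φ (i + 1))⁻¹ * b i * tailWitness g l a b c φ (i + 1) := by
  rw [betaB, Pf_eq_tail hi, tail_eq_tailWitness_mul (φ := φ)]
  exact conj_map_eq_conj_iff hw hφ

lemma betaC_eq_conj_iff (hφ : τ φ = φ⁻¹) (j : ℕ)
    (hw : τ (tailWitness g l a b c φ (g + j + 1)) = (tailWitness g l a b c φ (g + j + 1))⁻¹) :
    betaC τ l c j = φ * c j * φ⁻¹ ↔
      τ (c j)⁻¹ =
        (tailWitness g l a b c φ (g + j + 1))⁻¹ * c j * tailWitness g l a b c φ (g + j + 1) := by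
  rw [betaC, Qf_eq_tail (g := g) (a := a) (b := b), tail_eq_tailWitness_mul (φ := φ)]
  exact conj_map_eq_conj_iff hw hφ

lemma DecomposableWith.map_inv_eq (h : DecomposableWith τ g l a b c φ) : τ φ⁻¹ = φ := by
  simpa [tailWitness, tail_length] using h.1 (g + l) le_rfl

lemma Decomposable.exists_decomposableWith (hrel : muMap g l a b c = 1)
    (h : Decomposable τ g l a b c) : ∃ φ, DecomposableWith τ g l a b c φ := by
  obtain ⟨s, hfix, hcomm, hc, ha⟩ := h
  rcases Nat.eq_zero_or_pos (g + l) with hn | hn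
  · refine ⟨1, fun k hk => ?_, fun i hi => by omega⟩
    obtain rfl : k = 0 := by omega
    simp [tailWitness, tail_zero, hrel]
  let v : ℕ → U := fun k => s (k % (g + l))
  have hfactor : ∀ k < g + l, factor g a b c k = v k * (v (k + 1))⁻¹ := by
    refine (forall_factor_iff fun k x => x = v k * (v (k + 1))⁻¹).2
      ⟨fun i hi => ?_, fun j hj => ?_⟩
    · simp only [v, hcomm i hi, Nat.mod_eq_of_lt (show i < g + l by omega)]
    · simp only [v, hc j hj, Nat.mod_eq_of_lt (show g + j < g + l by omega)]
  have htail : ∀ k ≤ g + l, tail g l a b c k = v k * (v 0)⁻¹ :=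
    eq_mul_inv_of_telescoping (by rw [tail_zero, hrel])
      (fun k hk => by rw [← hfactor k hk, ← tail_eq_factor_mul hk])
  have hw : ∀ k ≤ g + l, tailWitness g l a b c (s 0)⁻¹ k = s (k % (g + l)) := fun k hk => by
    simp [tailWitness, htail k hk, v]
  refine ⟨(s 0)⁻¹, fun k hk => ?_, fun i hi => ?_⟩
  · rw [hw k hk, ← map_inv_eq_iff_map_eq_inv]
    exact hfix _ (Nat.mod_lt _ hn)
  · rw [hw (i + 1) (by omega)]
    exact ha i hi

lemma DecomposableWith.decomposable (hrel : muMap g l a b c = 1)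
    (h : DecomposableWith τ g l a b c φ) : Decomposable τ g l a b c := by
  obtain ⟨hfix, ha⟩ := h
  set w := tailWitness g l a b c φ
  have hfactor := (forall_factor_iff (g := g) (l := l) (a := a) (b := b) (c := c)
    fun k x => x = w k * (w ((k + 1) % (g + l)))⁻¹).1 fun k hk => by
      simp only [w, tailWitness_mod_length hrel (show k + 1 ≤ g + l by omega)]
      exact factor_eq_tailWitness hk
  refine ⟨w, fun k hk => (map_inv_eq_iff_map_eq_inv τ).2 (hfix k hk.le), hfactor.1, hfactor.2,
    fun i hi => ?_⟩
  simp only [w, tailWitness_mod_length hrel (show i + 1 ≤ g + l by omega)]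
  exact ha i hi

lemma DecomposableWith.beta_eq_conj (hτ : ∀ u : U, τ (τ u) = u)
    (h : DecomposableWith τ g l a b c φ) :
    (∀ i, i < g → betaA τ g l a b c i = φ * a i * φ⁻¹) ∧
      (∀ i, i < g → betaB τ g l a b c i = φ * b i * φ⁻¹) ∧
      (∀ j, j < l → betaC τ l c j = φ * c j * φ⁻¹) := by
  have hφ : τ φ = φ⁻¹ := (map_inv_eq_iff_map_eq_inv τ).1 h.map_inv_eq
  obtain ⟨hfix, ha⟩ := h
  refine ⟨fun i hi => ?_, fun i hi => (betaB_eq_conj_iff hφ hi (hfix _ (by omega))).2 (ha i hi),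
    fun j hj => (betaC_eq_conj_iff hφ j (hfix _ (by omega))).2 ?_⟩
  · exact (betaA_eq_conj_iff hφ hi (hfix _ (by omega))).2
      (map_eq_conj_of_map_eq_conj hτ (hfix _ (by omega)) (ha i hi))
  · have hc : c j =
        tailWitness g l a b c φ (g + j) * (tailWitness g l a b c φ (g + j + 1))⁻¹ := by
      rw [← factor_add (a := a) (b := b) (c := c)]
      exact factor_eq_tailWitness (by omega)
    rw [hc, map_inv, map_mul, map_inv, hfix _ (by omega), hfix _ (by omega)]
    group

lemma decomposableWith_of_beta_eq_conj (hφ : τ φ = φ⁻¹)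
    (hA : ∀ i, i < g → betaA τ g l a b c i = φ * a i * φ⁻¹)
    (hB : ∀ i, i < g → betaB τ g l a b c i = φ * b i * φ⁻¹)
    (hC : ∀ j, j < l → betaC τ l c j = φ * c j * φ⁻¹) :
    DecomposableWith τ g l a b c φ := by
  have hfix : ∀ k ≤ g + l, τ (tailWitness g l a b c φ k) = (tailWitness g l a b c φ k)⁻¹ := by
    refine map_eq_inv_of_telescoping (x := factor g a b c)
      (fun k hk => by simp only [tailWitness, tail_eq_factor_mul hk, mul_assoc])
      (by simp [tailWitness, tail_length, hφ]) ?_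
    refine (forall_factor_iff fun k x =>
      τ (tailWitness g l a b c φ (k + 1)) = (tailWitness g l a b c φ (k + 1))⁻¹ →
        τ x = (tailWitness g l a b c φ (k + 1))⁻¹ * x⁻¹ * tailWitness g l a b c φ (k + 1)).2
      ⟨fun i hi hw => ?_, fun j hj hw => ?_⟩
    · exact map_gcomm_of_map_eq_conj ((betaB_eq_conj_iff hφ hi hw).1 (hB i hi))
        ((betaA_eq_conj_iff hφ hi hw).1 (hA i hi))
    · have h := (betaC_eq_conj_iff hφ j hw).1 (hC j hj)
      rw [map_inv] at h
      rw [← inv_inv (τ (c j)), h]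
      group
  exact ⟨hfix, fun i hi => (betaB_eq_conj_iff hφ hi (hfix _ (by omega))).1 (hB i hi)⟩

end Witness

/-- **Characterization of decomposable representations.**  If the tuple
`(a₁,b₁,…,a_g,b_g,c₁,…,c_l)` satisfies `[a₁,b₁]⋯[a_g,b_g]·c₁⋯c_l = 1`, then it
is decomposable iff there is `φ ∈ U` with `τ(φ⁻¹) = φ` such that `β` of the
tuple is the tuple conjugated componentwise by `φ`. -/
theorem characterization_of_decomposable [Group U] (τ : U ≃* U)
    (hτ : ∀ u : U, τ (τ u) = u) (g l : ℕ) (a b c : ℕ → U)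
    (hrel : muMap g l a b c = 1) :
    Decomposable τ g l a b c ↔
      ∃ φ : U, τ φ⁻¹ = φ ∧
        (∀ i, i < g → betaA τ g l a b c i = φ * a i * φ⁻¹) ∧
        (∀ i, i < g → betaB τ g l a b c i = φ * b i * φ⁻¹) ∧
        (∀ j, j < l → betaC τ l c j = φ * c j * φ⁻¹) := by
  constructor
  · intro h
    obtain ⟨φ, hφ⟩ := h.exists_decomposableWith hrel
    exact ⟨φ, hφ.map_inv_eq, hφ.beta_eq_conj hτ⟩
  · rintro ⟨φ, hφ, hA, hB, hC⟩
    rw [map_inv_eq_iff_map_eq_inv] at hφ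
    exact (decomposableWith_of_beta_eq_conj hφ hA hB hC).decomposable hrel

end Stmt0
end

section
/- Let U be a group, τ : U → U an involutive automorphism, and u ∈ U. A tuple (a₁,b₁,…,a_g,b_g,c₁,…,c_l) ∈ U^{2g+l} is decomposable if and only if the simultaneously conjugated tuple (u a₁ u⁻¹, u b₁ u⁻¹, …, u c_l u⁻¹) is decomposable. -/
namespace Stmt1

variable {U : Type*}

/-- The commutator `[a,b] = a b a⁻¹ b⁻¹`. -/
def gcomm [Group U] (a b : U) : U := a * b * a⁻¹ * b⁻¹

/-- Ordered product `f i * f (i+1) * ⋯ * f (n-1)`. -/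
def oprod [Monoid U] (f : ℕ → U) (i n : ℕ) : U := ((List.range' i (n - i)).map f).prod

/-- `P_i = [a_{i+1},b_{i+1}] ⋯ [a_g,b_g] · c₁ ⋯ c_l` (0-based indices). -/
def Pf [Group U] (g l : ℕ) (a b c : ℕ → U) (i : ℕ) : U :=
  oprod (fun k => gcomm (a k) (b k)) (i + 1) g * oprod c 0 l

/-- `Q_j = c_{j+1} ⋯ c_l` (0-based indices). -/
def Qf [Monoid U] (l : ℕ) (c : ℕ → U) (j : ℕ) : U := oprod c (j + 1) l

/-- The `aᵢ`-component of the involution `β`: `a′_i = τ(P_i)⁻¹ τ(b_i) τ(P_i)`. -/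
def betaA [Group U] (τ : U ≃* U) (g l : ℕ) (a b c : ℕ → U) (i : ℕ) : U :=
  (τ (Pf g l a b c i))⁻¹ * τ (b i) * τ (Pf g l a b c i)

/-- The `bᵢ`-component of the involution `β`: `b′_i = τ(P_i)⁻¹ τ(a_i) τ(P_i)`. -/
def betaB [Group U] (τ : U ≃* U) (g l : ℕ) (a b c : ℕ → U) (i : ℕ) : U :=
  (τ (Pf g l a b c i))⁻¹ * τ (a i) * τ (Pf g l a b c i)

/-- The `cⱼ`-component of the involution `β`: `c′_j = τ(Q_j)⁻¹ τ(c_j⁻¹) τ(Q_j)`. -/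
def betaC [Group U] (τ : U ≃* U) (l : ℕ) (c : ℕ → U) (j : ℕ) : U :=
  (τ (Qf l c j))⁻¹ * τ (c j)⁻¹ * τ (Qf l c j)

/-- The momentum map `μ(a,b,c) = [a₁,b₁]⋯[a_g,b_g]·c₁⋯c_l`. -/
def muMap [Group U] (g l : ℕ) (a b c : ℕ → U) : U :=
  oprod (fun k => gcomm (a k) (b k)) 0 g * oprod c 0 l

/-- A tuple `(a₁,b₁,…,a_g,b_g,c₁,…,c_l)` is decomposable: there are
`v₁,…,v_g,w₁,…,w_l ∈ Fix(τ⁻)` (encoded as the single cyclic list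
`s 0,…,s (g+l-1)`, with `v_i = s (i-1)`, `w_j = s (g+j-1)`, and the cyclic
conventions `v_{g+1} := w₁`, `w_{l+1} := v₁` realized by reduction mod `g+l`)
with `[a_i,b_i] = v_i v_{i+1}⁻¹`, `c_j = w_j w_{j+1}⁻¹`, and
`τ(a_i) = v_{i+1}⁻¹ b_i v_{i+1}`. -/
def Decomposable [Group U] (τ : U ≃* U) (g l : ℕ) (a b c : ℕ → U) : Prop :=
  ∃ s : ℕ → U,
    (∀ k, k < g + l → τ (s k)⁻¹ = s k) ∧
    (∀ i, i < g → gcomm (a i) (b i) = s i * (s ((i + 1) % (g + l)))⁻¹) ∧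
    (∀ j, j < l → c j = s (g + j) * (s ((g + j + 1) % (g + l)))⁻¹) ∧
    (∀ i, i < g → τ (a i) = (s ((i + 1) % (g + l)))⁻¹ * b i * s ((i + 1) % (g + l)))

theorem gcomm_conj [Group U] (u a b : U) :
    gcomm (u * a * u⁻¹) (u * b * u⁻¹) = u * gcomm a b * u⁻¹ := by
  simp only [gcomm]; group

theorem inv_apply_twisted_conj [Group U] {τ : U ≃* U} (hτ : Function.Involutive τ) (u : U)
    {s : U} (hs : τ s⁻¹ = s) : τ (u * s * (τ u)⁻¹)⁻¹ = u * s * (τ u)⁻¹ := by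
  rw [mul_inv_rev, mul_inv_rev, inv_inv, map_mul, map_mul, hτ, ← map_inv, hs, map_inv, mul_assoc]

/-- The witnesses transform by the twisted conjugation `s k ↦ u * s k * (τ u)⁻¹`. -/
theorem Decomposable.conj [Group U] {τ : U ≃* U} (hτ : Function.Involutive τ) (u : U)
    {g l : ℕ} {a b c : ℕ → U} (h : Decomposable τ g l a b c) :
    Decomposable τ g l (fun i => u * a i * u⁻¹) (fun i => u * b i * u⁻¹)
      (fun j => u * c j * u⁻¹) := by
  obtain ⟨s, hfix, hcomm, hc, ha⟩ := h
  refine ⟨fun k => u * s k * (τ u)⁻¹, fun k hk => inv_apply_twisted_conj hτ u (hfix k hk),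
    fun i hi => ?_, fun j hj => ?_, fun i hi => ?_⟩
  · rw [gcomm_conj, hcomm i hi]; group
  · simp only [hc j hj]; group
  · simp only [map_mul, map_inv, ha i hi]; group

/-- A tuple is decomposable iff the tuple obtained by simultaneously
conjugating every component by `u` is decomposable. -/
theorem decomposable_iff_conj_decomposable [Group U] (τ : U ≃* U)
    (hτ : ∀ x : U, τ (τ x) = x) (u : U) (g l : ℕ) (a b c : ℕ → U) :
    Decomposable τ g l a b c ↔
      Decomposable τ g l (fun i => u * a i * u⁻¹) (fun i => u * b i * u⁻¹)
        (fun j => u * c j * u⁻¹) := by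
  refine ⟨Decomposable.conj hτ u, fun h => ?_⟩
  have hback : ∀ f : ℕ → U, (fun i => u⁻¹ * (u * f i * u⁻¹) * u⁻¹⁻¹) = f :=
    fun f => funext fun i => by group
  simpa only [hback] using h.conj hτ u⁻¹

end Stmt1
end

section
/- Let U be a group and τ : U → U an involutive automorphism. Let M₁ and M₂ be sets with U-actions, and for i = 1, 2 let μ_i : M_i → U be equivariant maps (μ_i(u·x) = uμ_i(x)u⁻¹) and β_i : M_i → M_i involutions satisfying β_i(u·x) = τ(u)·β_i(x) and μ_i(β_i(x)) = τ(μ_i(x)⁻¹) for all u, x. Equip M := M₁ × M₂ with the diagonal U-action and μ(x₁,x₂) := μ₁(x₁)μ₂(x₂), and define β(x₁,x₂) := ( μ₂(β₂(x₂)) · β₁(x₁), β₂(x₂) ). Then: (1) β is an involution on M; (2) β(u·x) = τ(u)·β(x) for all u ∈ U, x ∈ M; (3) μ(β(x)) = τ(μ(x)⁻¹) for all x ∈ M; and (4) if β₁(x₁) = x₁, μ₁(x₁) = 1, β₂(x₂) = x₂ and μ₂(x₂) = 1, then β(x₁,x₂) = (x₁,x₂) and μ(x₁,x₂) = 1. 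-/
section ProdInvolution

variable {U M₁ M₂ : Type*} [Group U] [MulAction U M₁]
  (τ : U ≃* U) (μ₁ : M₁ → U) (μ₂ : M₂ → U) (β₁ : M₁ → M₁) (β₂ : M₂ → M₂)

def prodInvolution (p : M₁ × M₂) : M₁ × M₂ :=
  (μ₂ (β₂ p.2) • β₁ p.1, β₂ p.2)

variable {τ μ₁ μ₂ β₁ β₂}

theorem prodInvolution_involutive (hτ : Function.Involutive τ) (hβ₁ : Function.Involutive β₁)
    (hβ₂ : Function.Involutive β₂) (hc₁ : ∀ (u : U) (x : M₁), β₁ (u • x) = τ u • β₁ x)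
    (hμβ₂ : ∀ x : M₂, μ₂ (β₂ x) = τ (μ₂ x)⁻¹) :
    Function.Involutive (prodInvolution μ₂ β₁ β₂) := by
  rintro ⟨x₁, x₂⟩
  have htwist : τ (μ₂ (β₂ x₂)) = (μ₂ x₂)⁻¹ := by rw [hμβ₂, hτ]
  simp only [prodInvolution, hβ₂ x₂, hc₁, hβ₁ x₁, htwist, smul_inv_smul]

theorem prodInvolution_smul [MulAction U M₂] (hc₁ : ∀ (u : U) (x : M₁), β₁ (u • x) = τ u • β₁ x)
    (hc₂ : ∀ (u : U) (x : M₂), β₂ (u • x) = τ u • β₂ x)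
    (he₂ : ∀ (u : U) (x : M₂), μ₂ (u • x) = u * μ₂ x * u⁻¹) (u : U) (p : M₁ × M₂) :
    prodInvolution μ₂ β₁ β₂ (u • p) = τ u • prodInvolution μ₂ β₁ β₂ p := by
  simp only [prodInvolution, Prod.smul_fst, Prod.smul_snd, Prod.smul_mk, hc₁, hc₂, he₂,
    smul_smul, inv_mul_cancel_right]

theorem mul_prodInvolution (he₁ : ∀ (u : U) (x : M₁), μ₁ (u • x) = u * μ₁ x * u⁻¹)
    (hμβ₁ : ∀ x : M₁, μ₁ (β₁ x) = τ (μ₁ x)⁻¹) (hμβ₂ : ∀ x : M₂, μ₂ (β₂ x) = τ (μ₂ x)⁻¹)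
    (p : M₁ × M₂) :
    μ₁ (prodInvolution μ₂ β₁ β₂ p).1 * μ₂ (prodInvolution μ₂ β₁ β₂ p).2
      = τ (μ₁ p.1 * μ₂ p.2)⁻¹ := by
  simp only [prodInvolution, he₁, inv_mul_cancel_right, hμβ₁, hμβ₂, mul_inv_rev, map_mul]

theorem prodInvolution_eq_self {p : M₁ × M₂} (h₁ : β₁ p.1 = p.1) (h₂ : β₂ p.2 = p.2)
    (hμ₂ : μ₂ p.2 = 1) : prodInvolution μ₂ β₁ β₂ p = p := by
  simp [prodInvolution, h₁, h₂, hμ₂]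

end ProdInvolution

/-- Product construction of compatible involutions: if `βᵢ` are involutions on
`U`-sets `Mᵢ` compatible with `τ` and the equivariant maps `μᵢ`, then
`β(x₁,x₂) = (μ₂(β₂ x₂) • β₁ x₁, β₂ x₂)` is an involution on `M₁ × M₂`
(diagonal action) compatible with `τ` and `μ(x₁,x₂) = μ₁(x₁)μ₂(x₂)`, and it
fixes pairs of fixed points lying in the respective `μᵢ`-fibers of `1`. -/
theorem product_involution {U M₁ M₂ : Type*} [Group U] [MulAction U M₁]
    [MulAction U M₂] (τ : U ≃* U) (hτ : ∀ u : U, τ (τ u) = u)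
    (μ₁ : M₁ → U) (μ₂ : M₂ → U) (β₁ : M₁ → M₁) (β₂ : M₂ → M₂)
    (hβ₁ : ∀ x, β₁ (β₁ x) = x) (hβ₂ : ∀ x, β₂ (β₂ x) = x)
    (hc₁ : ∀ (u : U) (x : M₁), β₁ (u • x) = τ u • β₁ x)
    (hc₂ : ∀ (u : U) (x : M₂), β₂ (u • x) = τ u • β₂ x)
    (he₁ : ∀ (u : U) (x : M₁), μ₁ (u • x) = u * μ₁ x * u⁻¹)
    (he₂ : ∀ (u : U) (x : M₂), μ₂ (u • x) = u * μ₂ x * u⁻¹)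
    (hμβ₁ : ∀ x : M₁, μ₁ (β₁ x) = τ (μ₁ x)⁻¹)
    (hμβ₂ : ∀ x : M₂, μ₂ (β₂ x) = τ (μ₂ x)⁻¹) :
    (∀ p : M₁ × M₂,
      (μ₂ (β₂ (μ₂ (β₂ p.2) • β₁ p.1, β₂ p.2).2) •
          β₁ (μ₂ (β₂ p.2) • β₁ p.1, β₂ p.2).1,
        β₂ (μ₂ (β₂ p.2) • β₁ p.1, β₂ p.2).2) = p) ∧
    (∀ (u : U) (p : M₁ × M₂),
      (μ₂ (β₂ (u • p).2) • β₁ (u • p).1, β₂ (u • p).2)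
        = τ u • (μ₂ (β₂ p.2) • β₁ p.1, β₂ p.2)) ∧
    (∀ p : M₁ × M₂,
      μ₁ (μ₂ (β₂ p.2) • β₁ p.1) * μ₂ (β₂ p.2) = τ (μ₁ p.1 * μ₂ p.2)⁻¹) ∧
    (∀ p : M₁ × M₂, β₁ p.1 = p.1 → μ₁ p.1 = 1 → β₂ p.2 = p.2 → μ₂ p.2 = 1 →
      (μ₂ (β₂ p.2) • β₁ p.1, β₂ p.2) = p ∧ μ₁ p.1 * μ₂ p.2 = 1) :=
  ⟨prodInvolution_involutive hτ hβ₁ hβ₂ hc₁ hμβ₂,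
    prodInvolution_smul hc₁ hc₂ he₂,
    mul_prodInvolution he₁ hμβ₁ hμβ₂,
    fun _ h₁ hμ₁ h₂ hμ₂ => ⟨prodInvolution_eq_self h₁ h₂ hμ₂, by rw [hμ₁, hμ₂, one_mul]⟩⟩
end

section
/- Let U be a group, τ : U → U an involutive automorphism, and g, l ≥ 0. Let β : U^{2g+l} → U^{2g+l} be the map of the context and let μ(a,b,c) := [a₁,b₁]⋯[a_g,b_g]·c₁⋯c_l. Then: (1) β is an involution (β ∘ β = id); (2) β(u a₁ u⁻¹, u b₁ u⁻¹, …, u c_l u⁻¹) = τ(u)·β(a₁,b₁,…,c_l) for every u ∈ U, where τ(u) acts by simultaneous conjugation on all components; and (3) μ(β(a,b,c)) = τ(μ(a,b,c)⁻¹) for every tuple. -/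
namespace Stmt9

variable {U : Type*}

/-- The commutator `[a,b] = a b a⁻¹ b⁻¹`. -/
def gcomm [Group U] (a b : U) : U := a * b * a⁻¹ * b⁻¹

/-- Ordered product `f i * f (i+1) * ⋯ * f (n-1)`. -/
def oprod [Monoid U] (f : ℕ → U) (i n : ℕ) : U := ((List.range' i (n - i)).map f).prod

/-- `P_i = [a_{i+1},b_{i+1}] ⋯ [a_g,b_g] · c₁ ⋯ c_l` (0-based indices). -/
def Pf [Group U] (g l : ℕ) (a b c : ℕ → U) (i : ℕ) : U :=
  oprod (fun k => gcomm (a k) (b k)) (i + 1) g * oprod c 0 l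

/-- `Q_j = c_{j+1} ⋯ c_l` (0-based indices). -/
def Qf [Monoid U] (l : ℕ) (c : ℕ → U) (j : ℕ) : U := oprod c (j + 1) l

/-- The `aᵢ`-component of the involution `β`: `a′_i = τ(P_i)⁻¹ τ(b_i) τ(P_i)`. -/
def betaA [Group U] (τ : U ≃* U) (g l : ℕ) (a b c : ℕ → U) (i : ℕ) : U :=
  (τ (Pf g l a b c i))⁻¹ * τ (b i) * τ (Pf g l a b c i)

/-- The `bᵢ`-component of the involution `β`: `b′_i = τ(P_i)⁻¹ τ(a_i) τ(P_i)`. -/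
def betaB [Group U] (τ : U ≃* U) (g l : ℕ) (a b c : ℕ → U) (i : ℕ) : U :=
  (τ (Pf g l a b c i))⁻¹ * τ (a i) * τ (Pf g l a b c i)

/-- The `cⱼ`-component of the involution `β`: `c′_j = τ(Q_j)⁻¹ τ(c_j⁻¹) τ(Q_j)`. -/
def betaC [Group U] (τ : U ≃* U) (l : ℕ) (c : ℕ → U) (j : ℕ) : U :=
  (τ (Qf l c j))⁻¹ * τ (c j)⁻¹ * τ (Qf l c j)

/-- The momentum map `μ(a,b,c) = [a₁,b₁]⋯[a_g,b_g]·c₁⋯c_l`. -/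
def muMap [Group U] (g l : ℕ) (a b c : ℕ → U) : U :=
  oprod (fun k => gcomm (a k) (b k)) 0 g * oprod c 0 l

/-- A tuple `(a₁,b₁,…,a_g,b_g,c₁,…,c_l)` is decomposable: there are
`v₁,…,v_g,w₁,…,w_l ∈ Fix(τ⁻)` (encoded as the single cyclic list
`s 0,…,s (g+l-1)`, with `v_i = s (i-1)`, `w_j = s (g+j-1)`, and the cyclic
conventions `v_{g+1} := w₁`, `w_{l+1} := v₁` realized by reduction mod `g+l`)
with `[a_i,b_i] = v_i v_{i+1}⁻¹`, `c_j = w_j w_{j+1}⁻¹`, and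
`τ(a_i) = v_{i+1}⁻¹ b_i v_{i+1}`. -/
def Decomposable [Group U] (τ : U ≃* U) (g l : ℕ) (a b c : ℕ → U) : Prop :=
  ∃ s : ℕ → U,
    (∀ k, k < g + l → τ (s k)⁻¹ = s k) ∧
    (∀ i, i < g → gcomm (a i) (b i) = s i * (s ((i + 1) % (g + l)))⁻¹) ∧
    (∀ j, j < l → c j = s (g + j) * (s ((g + j + 1) % (g + l)))⁻¹) ∧
    (∀ i, i < g → τ (a i) = (s ((i + 1) % (g + l)))⁻¹ * b i * s ((i + 1) % (g + l)))

/-!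
With `Rⱼ := cⱼ ⋯ c_l` we have `c′ⱼ = τ(Rⱼ)⁻¹ τ(Rⱼ₊₁)`, and with
`Sᵢ := [aᵢ,bᵢ] ⋯ [a_g,b_g] · c₁ ⋯ c_l` we have `[a′ᵢ,b′ᵢ] = τ(Sᵢ)⁻¹ τ(Sᵢ₊₁)`. Both products
telescope, so the tail products of `β(a,b,c)` are `τ(Qⱼ)⁻¹` and `τ(Pᵢ)⁻¹`, and the full product
is `τ(μ)⁻¹`. Applying `β` twice therefore conjugates by `τ(τ(Pᵢ)⁻¹)⁻¹ = Pᵢ` and undoes the first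
twist. Equivariance holds because `Pᵢ` and `Qⱼ` of a conjugated tuple are the conjugates.
-/

section OrderedProduct

variable [Monoid U]

theorem oprod_of_le (f : ℕ → U) {i n : ℕ} (h : n ≤ i) : oprod f i n = 1 := by
  simp [oprod, Nat.sub_eq_zero_of_le h]

theorem oprod_eq_mul_oprod_succ (f : ℕ → U) {i n : ℕ} (h : i < n) :
    oprod f i n = f i * oprod f (i + 1) n := by
  rw [oprod, oprod, show n - i = n - (i + 1) + 1 by omega, List.range'_succ]
  simp

theorem map_oprod {N : Type*} [Monoid N] (φ : U →* N) (f : ℕ → U) (i n : ℕ) :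
    oprod (fun k => φ (f k)) i n = φ (oprod f i n) := by
  simp [oprod, map_list_prod, List.map_map, Function.comp_def]

end OrderedProduct

section Group

variable [Group U]

theorem oprod_telescope {f T : ℕ → U} {i n : ℕ} (hin : i ≤ n)
    (hf : ∀ k, i ≤ k → k < n → f k = (T k)⁻¹ * T (k + 1)) :
    oprod f i n = (T i)⁻¹ * T n := by
  obtain ⟨d, rfl⟩ := Nat.exists_eq_add_of_le hin
  induction d generalizing i with
  | zero => simp [oprod_of_le]
  | succ d ih =>
    have hf' : ∀ k, i + 1 ≤ k → k < i + 1 + d → f k = (T k)⁻¹ * T (k + 1) :=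
      fun k hk hk' => hf k (by omega) (by omega)
    rw [oprod_eq_mul_oprod_succ f (by omega), show i + (d + 1) = i + 1 + d by omega,
      ih (by omega) hf', hf i le_rfl (by omega)]
    group

theorem oprod_conj (f : ℕ → U) (u : U) (i n : ℕ) :
    oprod (fun k => u * f k * u⁻¹) i n = u * oprod f i n * u⁻¹ :=
  map_oprod (MulAut.conj u).toMonoidHom f i n

theorem gcomm_conj (u a b : U) :
    gcomm (u * a * u⁻¹) (u * b * u⁻¹) = u * gcomm a b * u⁻¹ := by
  simp only [gcomm]
  group

variable (τ : U ≃* U) (g l : ℕ) (a b c : ℕ → U)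

theorem Pf_conj (u : U) (i : ℕ) :
    Pf g l (fun k => u * a k * u⁻¹) (fun k => u * b k * u⁻¹) (fun k => u * c k * u⁻¹) i
      = u * Pf g l a b c i * u⁻¹ := by
  simp only [Pf, gcomm_conj, oprod_conj]
  group

theorem Qf_conj (u : U) (j : ℕ) :
    Qf l (fun k => u * c k * u⁻¹) j = u * Qf l c j * u⁻¹ :=
  oprod_conj c u (j + 1) l

theorem betaA_conj (u : U) (i : ℕ) :
    betaA τ g l (fun k => u * a k * u⁻¹) (fun k => u * b k * u⁻¹) (fun k => u * c k * u⁻¹) i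
      = τ u * betaA τ g l a b c i * (τ u)⁻¹ := by
  simp only [betaA, Pf_conj, map_mul, map_inv]
  group

theorem betaB_conj (u : U) (i : ℕ) :
    betaB τ g l (fun k => u * a k * u⁻¹) (fun k => u * b k * u⁻¹) (fun k => u * c k * u⁻¹) i
      = τ u * betaB τ g l a b c i * (τ u)⁻¹ := by
  simp only [betaB, Pf_conj, map_mul, map_inv]
  group

theorem betaC_conj (u : U) (j : ℕ) :
    betaC τ l (fun k => u * c k * u⁻¹) j = τ u * betaC τ l c j * (τ u)⁻¹ := by
  simp only [betaC, Qf_conj, map_mul, map_inv]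
  group

theorem betaC_eq_telescope {j : ℕ} (hj : j < l) :
    betaC τ l c j = (τ (oprod c j l))⁻¹ * τ (oprod c (j + 1) l) := by
  simp only [betaC, Qf, oprod_eq_mul_oprod_succ c hj, map_mul, map_inv]
  group

theorem oprod_betaC {j : ℕ} (hj : j ≤ l) :
    oprod (betaC τ l c) j l = (τ (oprod c j l))⁻¹ := by
  rw [oprod_telescope (T := fun k => τ (oprod c k l)) hj fun k _ hk => betaC_eq_telescope τ l c hk,
    oprod_of_le c le_rfl]
  simp

theorem Qf_betaC (j : ℕ) : Qf l (betaC τ l c) j = (τ (Qf l c j))⁻¹ := by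
  rcases le_or_gt (j + 1) l with hj | hj
  · exact oprod_betaC τ l c hj
  · simp [Qf, oprod_of_le _ hj.le]

theorem gcomm_betaA_betaB_eq_telescope {i : ℕ} (hi : i < g) :
    gcomm (betaA τ g l a b c i) (betaB τ g l a b c i)
      = (τ (oprod (fun k => gcomm (a k) (b k)) i g * oprod c 0 l))⁻¹ *
        τ (oprod (fun k => gcomm (a k) (b k)) (i + 1) g * oprod c 0 l) := by
  rw [oprod_eq_mul_oprod_succ _ hi]
  simp only [betaA, betaB, Pf, gcomm, map_mul, map_inv]
  group

theorem oprod_gcomm_beta {i : ℕ} (hi : i ≤ g) :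
    oprod (fun k => gcomm (betaA τ g l a b c k) (betaB τ g l a b c k)) i g
      = (τ (oprod (fun k => gcomm (a k) (b k)) i g * oprod c 0 l))⁻¹ * τ (oprod c 0 l) := by
  rw [oprod_telescope (T := fun k => τ (oprod (fun k => gcomm (a k) (b k)) k g * oprod c 0 l)) hi
      fun k _ hk => gcomm_betaA_betaB_eq_telescope τ g l a b c hk,
    oprod_of_le _ le_rfl, one_mul]

theorem Pf_beta (i : ℕ) :
    Pf g l (betaA τ g l a b c) (betaB τ g l a b c) (betaC τ l c) i = (τ (Pf g l a b c i))⁻¹ := by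
  rw [Pf, Pf, oprod_betaC τ l c l.zero_le]
  rcases le_or_gt (i + 1) g with hi | hi
  · rw [oprod_gcomm_beta τ g l a b c hi]
    group
  · simp [oprod_of_le _ hi.le]

theorem muMap_beta :
    muMap g l (betaA τ g l a b c) (betaB τ g l a b c) (betaC τ l c) = τ (muMap g l a b c)⁻¹ := by
  rw [muMap, muMap, oprod_gcomm_beta τ g l a b c g.zero_le, oprod_betaC τ l c l.zero_le]
  simp only [map_inv, map_mul]
  group

variable {τ} (hτ : ∀ u : U, τ (τ u) = u)
include hτ

theorem betaA_beta (i : ℕ) :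
    betaA τ g l (betaA τ g l a b c) (betaB τ g l a b c) (betaC τ l c) i = a i := by
  simp only [betaA, betaB, Pf_beta, map_mul, map_inv, hτ]
  group

theorem betaB_beta (i : ℕ) :
    betaB τ g l (betaA τ g l a b c) (betaB τ g l a b c) (betaC τ l c) i = b i := by
  simp only [betaA, betaB, Pf_beta, map_mul, map_inv, hτ]
  group

theorem betaC_betaC (j : ℕ) : betaC τ l (betaC τ l c) j = c j := by
  simp only [betaC, Qf_betaC, map_mul, map_inv, hτ]
  group

end Group

/-- The map `β` on `U^{2g+l}` is an involution, is compatible with the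
simultaneous-conjugation action of `U` (twisted by `τ`), and satisfies
`μ ∘ β = τ⁻ ∘ μ`. -/
theorem beta_involutive_compatible [Group U] (τ : U ≃* U)
    (hτ : ∀ u : U, τ (τ u) = u) (g l : ℕ) (a b c : ℕ → U) :
    (∀ i, i < g →
      betaA τ g l (betaA τ g l a b c) (betaB τ g l a b c) (betaC τ l c) i = a i) ∧
    (∀ i, i < g →
      betaB τ g l (betaA τ g l a b c) (betaB τ g l a b c) (betaC τ l c) i = b i) ∧
    (∀ j, j < l → betaC τ l (betaC τ l c) j = c j) ∧
    (∀ u : U, ∀ i, i < g →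
      betaA τ g l (fun k => u * a k * u⁻¹) (fun k => u * b k * u⁻¹)
          (fun k => u * c k * u⁻¹) i
        = τ u * betaA τ g l a b c i * (τ u)⁻¹) ∧
    (∀ u : U, ∀ i, i < g →
      betaB τ g l (fun k => u * a k * u⁻¹) (fun k => u * b k * u⁻¹)
          (fun k => u * c k * u⁻¹) i
        = τ u * betaB τ g l a b c i * (τ u)⁻¹) ∧
    (∀ u : U, ∀ j, j < l →
      betaC τ l (fun k => u * c k * u⁻¹) j
        = τ u * betaC τ l c j * (τ u)⁻¹) ∧
    muMap g l (betaA τ g l a b c) (betaB τ g l a b c) (betaC τ l c)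
      = τ (muMap g l a b c)⁻¹ :=
  ⟨fun i _ => betaA_beta g l a b c hτ i, fun i _ => betaB_beta g l a b c hτ i,
    fun j _ => betaC_betaC l c hτ j, fun u i _ => betaA_conj τ g l a b c u i,
    fun u i _ => betaB_conj τ g l a b c u i, fun u j _ => betaC_conj τ l c u j,
    muMap_beta τ g l a b c⟩

end Stmt9
end

section
/- Let U be a group, τ : U → U an involutive automorphism, and T ⊆ U a commutative subgroup with τ(t⁻¹) = t for all t ∈ T. Let β : U^{2g+l} → U^{2g+l} be the map of the context and μ(a,b,c) := [a₁,b₁]⋯[a_g,b_g]·c₁⋯c_l. Then for any r₁,…,r_g ∈ T and t₁,…,t_l ∈ T, the tuple x := (r₁, τ(r₁), r₂, τ(r₂), …, r_g, τ(r_g), t₁, …, t_l) satisfies β(x) = x and μ(x) = t₁⋯t_l ∈ T. -/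
/-! On `T` the involution acts as inversion (apply `τ s⁻¹ = s` to `s = t⁻¹`), so every commutator
`[rᵢ, τ rᵢ] = [rᵢ, rᵢ⁻¹]` is trivial and each `Pᵢ` collapses to `t₁⋯t_l ∈ T`. Every component of `β`
is then a conjugate of an element of `T` by an element of `T`, hence unchanged since `T` is
commutative. -/

namespace Stmt10

variable {U : Type*}

/-- The commutator `[a,b] = a b a⁻¹ b⁻¹`. -/
def gcomm [Group U] (a b : U) : U := a * b * a⁻¹ * b⁻¹

/-- Ordered product `f i * f (i+1) * ⋯ * f (n-1)`. -/
def oprod [Monoid U] (f : ℕ → U) (i n : ℕ) : U := ((List.range' i (n - i)).map f).prod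

/-- `P_i = [a_{i+1},b_{i+1}] ⋯ [a_g,b_g] · c₁ ⋯ c_l` (0-based indices). -/
def Pf [Group U] (g l : ℕ) (a b c : ℕ → U) (i : ℕ) : U :=
  oprod (fun k => gcomm (a k) (b k)) (i + 1) g * oprod c 0 l

/-- `Q_j = c_{j+1} ⋯ c_l` (0-based indices). -/
def Qf [Monoid U] (l : ℕ) (c : ℕ → U) (j : ℕ) : U := oprod c (j + 1) l

/-- The `aᵢ`-component of the involution `β`: `a′_i = τ(P_i)⁻¹ τ(b_i) τ(P_i)`. -/
def betaA [Group U] (τ : U ≃* U) (g l : ℕ) (a b c : ℕ → U) (i : ℕ) : U :=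
  (τ (Pf g l a b c i))⁻¹ * τ (b i) * τ (Pf g l a b c i)

/-- The `bᵢ`-component of the involution `β`: `b′_i = τ(P_i)⁻¹ τ(a_i) τ(P_i)`. -/
def betaB [Group U] (τ : U ≃* U) (g l : ℕ) (a b c : ℕ → U) (i : ℕ) : U :=
  (τ (Pf g l a b c i))⁻¹ * τ (a i) * τ (Pf g l a b c i)

/-- The `cⱼ`-component of the involution `β`: `c′_j = τ(Q_j)⁻¹ τ(c_j⁻¹) τ(Q_j)`. -/
def betaC [Group U] (τ : U ≃* U) (l : ℕ) (c : ℕ → U) (j : ℕ) : U :=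
  (τ (Qf l c j))⁻¹ * τ (c j)⁻¹ * τ (Qf l c j)

/-- The momentum map `μ(a,b,c) = [a₁,b₁]⋯[a_g,b_g]·c₁⋯c_l`. -/
def muMap [Group U] (g l : ℕ) (a b c : ℕ → U) : U :=
  oprod (fun k => gcomm (a k) (b k)) 0 g * oprod c 0 l

/-- A tuple `(a₁,b₁,…,a_g,b_g,c₁,…,c_l)` is decomposable: there are
`v₁,…,v_g,w₁,…,w_l ∈ Fix(τ⁻)` (encoded as the single cyclic list
`s 0,…,s (g+l-1)`, with `v_i = s (i-1)`, `w_j = s (g+j-1)`, and the cyclic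
conventions `v_{g+1} := w₁`, `w_{l+1} := v₁` realized by reduction mod `g+l`)
with `[a_i,b_i] = v_i v_{i+1}⁻¹`, `c_j = w_j w_{j+1}⁻¹`, and
`τ(a_i) = v_{i+1}⁻¹ b_i v_{i+1}`. -/
def Decomposable [Group U] (τ : U ≃* U) (g l : ℕ) (a b c : ℕ → U) : Prop :=
  ∃ s : ℕ → U,
    (∀ k, k < g + l → τ (s k)⁻¹ = s k) ∧
    (∀ i, i < g → gcomm (a i) (b i) = s i * (s ((i + 1) % (g + l)))⁻¹) ∧
    (∀ j, j < l → c j = s (g + j) * (s ((g + j + 1) % (g + l)))⁻¹) ∧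
    (∀ i, i < g → τ (a i) = (s ((i + 1) % (g + l)))⁻¹ * b i * s ((i + 1) % (g + l)))

section Oprod

variable [Monoid U] {f : ℕ → U} {i n : ℕ}

lemma oprod_mem {S : Type*} [SetLike S U] [SubmonoidClass S U] {s : S}
    (h : ∀ k, i ≤ k → k < n → f k ∈ s) : oprod f i n ∈ s :=
  list_prod_mem <| by
    simp only [List.forall_mem_map, List.mem_range'_1]
    exact fun k hk => h k hk.1 (by omega)

lemma oprod_eq_one (h : ∀ k, i ≤ k → k < n → f k = 1) : oprod f i n = 1 :=
  Submonoid.mem_bot.mp <| oprod_mem fun k hik hkn => Submonoid.mem_bot.mpr (h k hik hkn)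

end Oprod

@[simp]
lemma gcomm_inv_right [Group U] (a : U) : gcomm a a⁻¹ = 1 := by
  simp [gcomm]

section Torus

variable [Group U] {τ : U ≃* U} {T : Subgroup U} (hT : ∀ t ∈ T, τ t⁻¹ = t)
include hT

lemma map_eq_inv_of_mem {x : U} (hx : x ∈ T) : τ x = x⁻¹ := by
  simpa using hT x⁻¹ (inv_mem hx)

lemma map_mem_of_mem {x : U} (hx : x ∈ T) : τ x ∈ T := by
  rw [map_eq_inv_of_mem hT hx]
  exact inv_mem hx

lemma map_map_of_mem {x : U} (hx : x ∈ T) : τ (τ x) = x := by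
  rw [map_eq_inv_of_mem hT hx, hT x hx]

lemma inv_map_mul_mul_map_of_mem (hcomm : ∀ x ∈ T, ∀ y ∈ T, x * y = y * x) {x y : U}
    (hx : x ∈ T) (hy : y ∈ T) : (τ x)⁻¹ * y * τ x = y := by
  rw [map_eq_inv_of_mem hT hx, inv_inv]
  exact Commute.mul_inv_cancel (hcomm x hx y hy)

lemma oprod_gcomm_map_eq_one {g : ℕ} {r : ℕ → U} (hr : ∀ i, i < g → r i ∈ T) (i : ℕ) :
    oprod (fun k => gcomm (r k) (τ (r k))) i g = 1 :=
  oprod_eq_one fun k _ hk => by rw [map_eq_inv_of_mem hT (hr k hk), gcomm_inv_right]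

lemma Pf_map_eq {g l : ℕ} {r : ℕ → U} (hr : ∀ i, i < g → r i ∈ T) (c : ℕ → U) (i : ℕ) :
    Pf g l r (fun k => τ (r k)) c i = oprod c 0 l := by
  rw [Pf, oprod_gcomm_map_eq_one hT hr, one_mul]

end Torus

theorem beta_fixes_torus_tuple_general [Group U] (τ : U ≃* U)
    (T : Subgroup U) (hcomm : ∀ x ∈ T, ∀ y ∈ T, x * y = y * x)
    (hT : ∀ t ∈ T, τ t⁻¹ = t)
    (g l : ℕ) (r t : ℕ → U) (hr : ∀ i, i < g → r i ∈ T)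
    (ht : ∀ j, j < l → t j ∈ T) :
    (∀ i, i < g → betaA τ g l r (fun k => τ (r k)) t i = r i) ∧
    (∀ i, i < g → betaB τ g l r (fun k => τ (r k)) t i = τ (r i)) ∧
    (∀ j, j < l → betaC τ l t j = t j) ∧
    muMap g l r (fun k => τ (r k)) t = oprod t 0 l ∧
    oprod t 0 l ∈ T := by
  have hS : oprod t 0 l ∈ T := oprod_mem fun k _ hk => ht k hk
  refine ⟨fun i hi => ?_, fun i hi => ?_, fun j hj => ?_, ?_, hS⟩
  · rw [betaA, Pf_map_eq hT hr, map_map_of_mem hT (hr i hi)]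
    exact inv_map_mul_mul_map_of_mem hT hcomm hS (hr i hi)
  · rw [betaB, Pf_map_eq hT hr]
    exact inv_map_mul_mul_map_of_mem hT hcomm hS (map_mem_of_mem hT (hr i hi))
  · rw [betaC, hT _ (ht j hj)]
    exact inv_map_mul_mul_map_of_mem hT hcomm (oprod_mem fun k _ hk => ht k hk) (ht j hj)
  · rw [muMap, oprod_gcomm_map_eq_one hT hr, one_mul]

/-- If `T` is a commutative subgroup pointwise fixed by `τ⁻`, then for
`r₁,…,r_g, t₁,…,t_l ∈ T` the tuple `(r₁,τ(r₁),…,r_g,τ(r_g),t₁,…,t_l)` is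
fixed by `β` and its momentum-map value is `t₁⋯t_l ∈ T`. -/
theorem beta_fixes_torus_tuple [Group U] (τ : U ≃* U)
    (hτ : ∀ u : U, τ (τ u) = u)
    (T : Subgroup U) (hcomm : ∀ x ∈ T, ∀ y ∈ T, x * y = y * x)
    (hT : ∀ t ∈ T, τ t⁻¹ = t)
    (g l : ℕ) (r t : ℕ → U) (hr : ∀ i, i < g → r i ∈ T)
    (ht : ∀ j, j < l → t j ∈ T) :
    (∀ i, i < g → betaA τ g l r (fun k => τ (r k)) t i = r i) ∧
    (∀ i, i < g → betaB τ g l r (fun k => τ (r k)) t i = τ (r i)) ∧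
    (∀ j, j < l → betaC τ l t j = t j) ∧
    muMap g l r (fun k => τ (r k)) t = oprod t 0 l ∧
    oprod t 0 l ∈ T :=
  beta_fixes_torus_tuple_general τ T hcomm hT g l r t hr ht

end Stmt10
end

section
/- Let π : Ũ → U be a group homomorphism, τ : U → U and τ̃ : Ũ → Ũ involutive automorphisms with π ∘ τ̃ = τ ∘ π. Let M be a set with a U-action, μ : M → U an equivariant map (μ(u·x) = uμ(x)u⁻¹), and β : M → M an involution with β(u·x) = τ(u)·β(x) and μ(β(x)) = τ(μ(x)⁻¹) for all u, x. Set M̃ := {(x, ũ) ∈ M × Ũ : μ(x) = π(ũ)}, let Ũ act by ũ₀·(x, ũ) := (π(ũ₀)·x, ũ₀ ũ ũ₀⁻¹), and let μ̃(x, ũ) := ũ. Then: (1) M̃ is stable under this Ũ-action; (2) the map β̃(x, ũ) := (β(x), τ̃(ũ⁻¹)) sends M̃ into M̃; (3) β̃ is an involution on M̃; (4) β̃(ũ₀·y) = τ̃(ũ₀)·β̃(y) for all ũ₀ ∈ Ũ and y ∈ M̃; and (5) μ̃(β̃(y)) = τ̃(μ̃(y)⁻¹) for all y ∈ M̃. 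-/
namespace Stmt11

variable {Ut U M : Type*} [Group Ut] [Group U] [MulAction U M]

/-- The fiber product `M̃ = M ×_U Ũ = {(x, ũ) | μ(x) = π(ũ)}`. -/
def Mt (π : Ut →* U) (μ : M → U) : Set (M × Ut) := {p | μ p.1 = π p.2}

/-- The `Ũ`-action `ũ₀ · (x, ũ) = (π(ũ₀) · x, ũ₀ ũ ũ₀⁻¹)` on `M × Ũ`. -/
def act (π : Ut →* U) (u₀ : Ut) (p : M × Ut) : M × Ut :=
  (π u₀ • p.1, u₀ * p.2 * u₀⁻¹)

/-- The lifted involution `β̃(x, ũ) = (β(x), τ̃(ũ⁻¹))`. -/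
def βt (τt : Ut ≃* Ut) (β : M → M) (p : M × Ut) : M × Ut :=
  (β p.1, τt p.2⁻¹)

theorem act_mem_Mt {π : Ut →* U} {μ : M → U}
    (hequiv : ∀ (u : U) (x : M), μ (u • x) = u * μ x * u⁻¹)
    (u₀ : Ut) {p : M × Ut} (hp : p ∈ Mt π μ) : act π u₀ p ∈ Mt π μ := by
  change μ (π u₀ • p.1) = π (u₀ * p.2 * u₀⁻¹)
  rw [hequiv, hp, map_mul, map_mul, map_inv]

omit [MulAction U M] in
theorem βt_mem_Mt {π : Ut →* U} {τ : U ≃* U} {τt : Ut ≃* Ut} {μ : M → U} {β : M → M}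
    (hπτ : ∀ u : Ut, π (τt u) = τ (π u)) (hμβ : ∀ x : M, μ (β x) = τ (μ x)⁻¹)
    {p : M × Ut} (hp : p ∈ Mt π μ) : βt τt β p ∈ Mt π μ := by
  change μ (β p.1) = π (τt p.2⁻¹)
  rw [hμβ, hp, hπτ, map_inv π]

theorem βt_involutive {τt : Ut ≃* Ut} {β : M → M}
    (hτt : Function.Involutive τt) (hβ : Function.Involutive β) :
    Function.Involutive (βt τt β) := fun p => by
  change (β (β p.1), τt (τt p.2⁻¹)⁻¹) = p
  rw [hβ, ← map_inv, inv_inv, hτt]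

theorem βt_act {π : Ut →* U} {τ : U ≃* U} {τt : Ut ≃* Ut} {β : M → M}
    (hπτ : ∀ u : Ut, π (τt u) = τ (π u)) (hc : ∀ (u : U) (x : M), β (u • x) = τ u • β x)
    (u₀ : Ut) (p : M × Ut) : βt τt β (act π u₀ p) = act π (τt u₀) (βt τt β p) := by
  change (β (π u₀ • p.1), τt (u₀ * p.2 * u₀⁻¹)⁻¹)
    = (π (τt u₀) • β p.1, τt u₀ * τt p.2⁻¹ * (τt u₀)⁻¹)
  simp only [hc, hπτ, mul_inv_rev, inv_inv, map_mul, map_inv, mul_assoc]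

theorem lifted_involution_general (π : Ut →* U) (τ : U ≃* U) (τt : Ut ≃* Ut)
    (hτt : ∀ u : Ut, τt (τt u) = u)
    (hπτ : ∀ u : Ut, π (τt u) = τ (π u))
    (μ : M → U) (hequiv : ∀ (u : U) (x : M), μ (u • x) = u * μ x * u⁻¹)
    (β : M → M) (hβ : ∀ x, β (β x) = x)
    (hc : ∀ (u : U) (x : M), β (u • x) = τ u • β x)
    (hμβ : ∀ x : M, μ (β x) = τ (μ x)⁻¹) :
    (∀ (u₀ : Ut), ∀ p ∈ Mt π μ, act π u₀ p ∈ Mt π μ) ∧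
    (∀ p ∈ Mt π μ, βt τt β p ∈ Mt π μ) ∧
    (∀ p ∈ Mt π μ, βt τt β (βt τt β p) = p) ∧
    (∀ (u₀ : Ut), ∀ p ∈ Mt π μ,
      βt τt β (act π u₀ p) = act π (τt u₀) (βt τt β p)) ∧
    (∀ p ∈ Mt π μ, (βt τt β p).2 = τt (p.2)⁻¹) :=
  ⟨fun u₀ _ hp => act_mem_Mt hequiv u₀ hp,
    fun _ hp => βt_mem_Mt hπτ hμβ hp,
    fun p _ => βt_involutive hτt hβ p,
    fun u₀ p _ => βt_act hπτ hc u₀ p,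
    fun _ _ => rfl⟩

/-- Lifting a compatible involution through a covering-type homomorphism
`π : Ũ → U`: the fiber product `M̃` is stable under the `Ũ`-action and under
`β̃`, and `β̃` is an involution on `M̃` compatible with `τ̃` and with the lifted
momentum map `μ̃(x, ũ) = ũ`. -/
theorem lifted_involution (π : Ut →* U) (τ : U ≃* U) (τt : Ut ≃* Ut)
    (hτ : ∀ u : U, τ (τ u) = u) (hτt : ∀ u : Ut, τt (τt u) = u)
    (hπτ : ∀ u : Ut, π (τt u) = τ (π u))
    (μ : M → U) (hequiv : ∀ (u : U) (x : M), μ (u • x) = u * μ x * u⁻¹)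
    (β : M → M) (hβ : ∀ x, β (β x) = x)
    (hc : ∀ (u : U) (x : M), β (u • x) = τ u • β x)
    (hμβ : ∀ x : M, μ (β x) = τ (μ x)⁻¹) :
    (∀ (u₀ : Ut), ∀ p ∈ Mt π μ, act π u₀ p ∈ Mt π μ) ∧
    (∀ p ∈ Mt π μ, βt τt β p ∈ Mt π μ) ∧
    (∀ p ∈ Mt π μ, βt τt β (βt τt β p) = p) ∧
    (∀ (u₀ : Ut), ∀ p ∈ Mt π μ,
      βt τt β (act π u₀ p) = act π (τt u₀) (βt τt β p)) ∧
    (∀ p ∈ Mt π μ, (βt τt β p).2 = τt (p.2)⁻¹) :=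
  lifted_involution_general π τ τt hτt hπτ μ hequiv β hβ hc hμβ

end Stmt11
end

section
/- Let U be a group, τ : U → U an involutive automorphism, and d ∈ U such that every element z of the centralizer Z_U(d) satisfies τ(z⁻¹) = z. Let ψ ∈ U and set c := ψ⁻¹ d ψ. If φ ∈ U satisfies τ(c⁻¹) = φ c φ⁻¹, then τ(φ⁻¹) = φ. -/
/-!
Since `d` commutes with itself, `τ d⁻¹ = d`, so `τ(c⁻¹) = (τ ψ)⁻¹ d (τ ψ)`. The hypothesis then says
that `d` is conjugated to the same element by `τ ψ` and by `ψ φ⁻¹`, i.e. `g := τ ψ * φ * ψ⁻¹` centralizes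
`d`, hence `τ g⁻¹ = g`. As `τ` is involutive, the twisted conjugation `x ↦ τ ψ * x * ψ⁻¹` preserves
the condition `τ x⁻¹ = x`, in both directions, so `τ φ⁻¹ = φ`.
-/

theorem commute_mul_inv_of_inv_mul_mul_eq {G : Type*} [Group G] {a b d : G}
    (h : a⁻¹ * d * a = b⁻¹ * d * b) : Commute (a * b⁻¹) d :=
  calc a * b⁻¹ * d = a * (b⁻¹ * d * b) * b⁻¹ := by group
    _ = a * (a⁻¹ * d * a) * b⁻¹ := by rw [h]
    _ = d * (a * b⁻¹) := by group

section Involution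

variable {G : Type*} [Group G] (τ : G ≃* G)

theorem map_inv_twisted_conj (hτ : ∀ g : G, τ (τ g) = g) (a x : G) :
    τ (τ a * x * a⁻¹)⁻¹ = τ a * τ x⁻¹ * a⁻¹ := by
  simp only [mul_inv_rev, inv_inv, map_mul, map_inv, hτ, mul_assoc]

theorem map_inv_twisted_conj_eq_iff (hτ : ∀ g : G, τ (τ g) = g) (a x : G) :
    τ (τ a * x * a⁻¹)⁻¹ = τ a * x * a⁻¹ ↔ τ x⁻¹ = x := by
  rw [map_inv_twisted_conj τ hτ, mul_left_inj, mul_right_inj]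

end Involution

/-- If every element of the centralizer of `d` is symmetric (`τ(z⁻¹) = z`)
and `c = ψ⁻¹ d ψ`, then any `φ` with `τ(c⁻¹) = φ c φ⁻¹` is symmetric:
`τ(φ⁻¹) = φ`. -/
theorem conjugator_is_symmetric {U : Type*} [Group U]
    (τ : U ≃* U) (hτ : ∀ u : U, τ (τ u) = u)
    (d : U) (hd : ∀ z : U, z * d = d * z → τ z⁻¹ = z)
    (ψ φ : U)
    (h : τ (ψ⁻¹ * d * ψ)⁻¹ = φ * (ψ⁻¹ * d * ψ) * φ⁻¹) :
    τ φ⁻¹ = φ := by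
  have hd_self : τ d⁻¹ = d := hd d rfl
  have hconj : (τ ψ)⁻¹ * d * τ ψ = (ψ * φ⁻¹)⁻¹ * d * (ψ * φ⁻¹) := by
    simpa only [mul_inv_rev, inv_inv, map_mul, map_inv, hd_self, mul_assoc] using h
  have hcomm := commute_mul_inv_of_inv_mul_mul_eq hconj
  rw [mul_inv_rev, inv_inv, ← mul_assoc] at hcomm
  exact (map_inv_twisted_conj_eq_iff τ hτ ψ φ).mp (hd _ hcomm.eq)
end
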